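/- arXiv:2405.06812 — 2 statements merged into one kernel-verified Lean document; each statement's English description precedes it below -/
import Mathlib

section
/- Let A be the generator of a C₀-semigroup (T_A(t)) on a Banach space X with ‖T_A(t)‖ ≤ M for all t ≥ 0, where M ≥ 1. Let C be a linear operator with D(A) ⊆ D(C) such that ‖C R(μ,A)‖ ≤ K/μ for all μ > 0, for some K > 0. Then A + C generates a C₀-semigroup satisfying ‖T_{A+C}(t)‖ ≤ M e^{MKt} for all t ≥ 0. -/
open Filter Topology

variable {X : Type*} [NormedAddCommGroup X] [NormedSpace ℂ X] [CompleteSpace X]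

/-- `T` is a strongly continuous one-parameter semigroup on `[0,∞)`. -/
def IsC0Semigroup (T : ℝ → X →L[ℂ] X) : Prop :=
  T 0 = 1 ∧ (∀ s t : ℝ, 0 ≤ s → 0 ≤ t → T (s + t) = T s ∘L T t) ∧
    ∀ x : X, ContinuousOn (fun t => T t x) (Set.Ici 0)

/-- The (possibly unbounded) operator `A` is the infinitesimal generator of the
C₀-semigroup `T`. -/
def IsGenerator (T : ℝ → X →L[ℂ] X) (A : X →ₗ.[ℂ] X) : Prop :=
  IsC0Semigroup T ∧
    (∀ x : A.domain,
      Tendsto (fun t : ℝ => (t : ℂ)⁻¹ • (T t x - (x : X))) (𝓝[>] 0) (𝓝 (A x))) ∧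
    (∀ x : X,
      (∃ y, Tendsto (fun t : ℝ => (t : ℂ)⁻¹ • (T t x - x)) (𝓝[>] 0) (𝓝 y)) →
        x ∈ A.domain)

/-- `R` is the resolvent `(μ - A)⁻¹` of the operator `A` at the point `μ`. -/
def IsResolventAt (A : X →ₗ.[ℂ] X) (μ : ℂ) (R : X →L[ℂ] X) : Prop :=
  (∀ x : X, ∃ hx : R x ∈ A.domain, μ • R x - A ⟨R x, hx⟩ = x) ∧
    ∀ y : A.domain, R (μ • (y : X) - A y) = (y : X)

/-- `μ` belongs to the resolvent set of `A`. -/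
def InResolventSet (A : X →ₗ.[ℂ] X) (μ : ℂ) : Prop :=
  ∃ R : X →L[ℂ] X, IsResolventAt A μ R


/-!
For `y ∈ D(A)` and `μ > 0` we have `y = R(μ, A) (μ y - A y)`, so the hypothesis gives
`‖C y‖ ≤ K ‖y‖ + (K / μ) ‖A y‖`, and `μ → ∞` yields `‖C y‖ ≤ K ‖y‖`. Since `D(A)` is dense,
`C` agrees on `D(A)` with a bounded operator `B` of norm at most `K`, and we are reduced to
bounded perturbations. The Dyson–Phillips series `S = ∑ Sₙ`, `S₀ = T`,
`Sₙ₊₁(t) = ∫₀ᵗ T(t - s) B Sₙ(s) ds`, with `‖Sₙ(t)‖ ≤ M (M K t)ⁿ / n!`, solves the variation of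
constants equation `S(t) = T(t) + ∫₀ᵗ T(t - s) B S(s) ds`. Solutions of this equation are unique
by Grönwall's lemma, which gives the semigroup law, and differentiating it at `0` shows that `S`
is generated by `A + B = A + C`.

The resolvent `R(μ, A)` needed above is the Laplace transform of `T`, and `μ R(μ, A) x → x`
as `μ → ∞` shows that `D(A)` is dense.
-/

open Set MeasureTheory

set_option linter.unusedSectionVars false

theorem tendsto_inv_smul_integral_of_continuous {E : Type*} [NormedAddCommGroup E]
    [NormedSpace ℝ E] [CompleteSpace E] {G : ℝ × ℝ → E} (hG : Continuous G) :
    Tendsto (fun t : ℝ => t⁻¹ • ∫ s in (0 : ℝ)..t, G (t, s)) (𝓝[>] 0) (𝓝 (G (0, 0))) := by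
  rw [Metric.tendsto_nhdsWithin_nhds]
  intro ε hε
  obtain ⟨δ, hδ, hGδ⟩ := Metric.continuousAt_iff.1 hG.continuousAt (ε / 2) (half_pos hε)
  refine ⟨δ, hδ, fun t (ht : 0 < t) htδ => ?_⟩
  rw [Real.dist_0_eq_abs, abs_of_pos ht] at htδ
  have hclose : ∀ s ∈ uIoc 0 t, ‖G (t, s) - G (0, 0)‖ ≤ ε / 2 := by
    intro s hs
    rw [uIoc_of_le ht.le] at hs
    rw [← dist_eq_norm]
    refine (hGδ ?_).le
    rw [Prod.dist_eq, Real.dist_0_eq_abs, Real.dist_0_eq_abs, abs_of_pos ht, abs_of_pos hs.1]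
    exact max_lt htδ (hs.2.trans_lt htδ)
  have hint : IntervalIntegrable (fun s => G (t, s)) volume 0 t :=
    (hG.comp (Continuous.prodMk_right t)).intervalIntegrable 0 t
  have hsub : t⁻¹ • (∫ s in (0 : ℝ)..t, G (t, s)) - G (0, 0)
      = t⁻¹ • ∫ s in (0 : ℝ)..t, (G (t, s) - G (0, 0)) := by
    rw [intervalIntegral.integral_sub hint intervalIntegrable_const,
      intervalIntegral.integral_const, sub_zero, smul_sub, smul_smul, inv_mul_cancel₀ ht.ne',
      one_smul]
  calc dist (t⁻¹ • ∫ s in (0 : ℝ)..t, G (t, s)) (G (0, 0))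
      = t⁻¹ * ‖∫ s in (0 : ℝ)..t, (G (t, s) - G (0, 0))‖ := by
        rw [dist_eq_norm, hsub, norm_smul, Real.norm_of_nonneg (inv_nonneg.2 ht.le)]
    _ ≤ t⁻¹ * (ε / 2 * |t - 0|) := by
        gcongr; exact intervalIntegral.norm_integral_le_of_norm_le_const hclose
    _ = ε / 2 := by rw [sub_zero, abs_of_pos ht]; field_simp
    _ < ε := half_lt_self hε

theorem eq_zero_of_norm_le_mul_integral_norm {E : Type*} [NormedAddCommGroup E] {u : ℝ → E}
    {L b : ℝ} (hu : Continuous u)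
    (h : ∀ t ∈ Icc 0 b, ‖u t‖ ≤ L * ∫ s in (0 : ℝ)..t, ‖u s‖) : ∀ t ∈ Icc 0 b, u t = 0 := by
  set φ : ℝ → ℝ := fun t => ∫ s in (0 : ℝ)..t, ‖u s‖
  have hφ' : ∀ t, HasDerivAt φ ‖u t‖ t := fun t =>
    (hu.norm.integral_hasStrictDerivAt 0 t).hasDerivAt
  have hφ_nonneg : ∀ t ∈ Icc 0 b, φ t = ‖φ t‖ := fun t ht =>
    (Real.norm_of_nonneg (intervalIntegral.integral_nonneg ht.1 fun _ _ => norm_nonneg _)).symm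
  have hφ : ∀ t ∈ Icc 0 b, φ t = 0 :=
    eq_zero_of_abs_deriv_le_mul_abs_self_of_eq_zero_right
      (fun t _ => (hφ' t).continuousAt.continuousWithinAt)
      (fun t _ => (hφ' t).hasDerivWithinAt) intervalIntegral.integral_same
      (fun t ht => by
        rw [norm_norm, ← hφ_nonneg t (Ico_subset_Icc_self ht)]
        exact h t (Ico_subset_Icc_self ht))
  intro t ht
  simpa [φ, hφ t ht] using h t ht

theorem ContinuousLinearMap.continuous_uncurry_of_norm_le {α 𝕜 E F : Type*} [TopologicalSpace α]
    [NontriviallyNormedField 𝕜] [NormedAddCommGroup E] [NormedSpace 𝕜 E]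
    [NormedAddCommGroup F] [NormedSpace 𝕜 F] {T : α → E →L[𝕜] F} {M : ℝ}
    (hc : ∀ x, Continuous fun t => T t x) (hM : ∀ t, ‖T t‖ ≤ M) :
    Continuous fun p : α × E => T p.1 p.2 :=
  continuous_prod_of_continuous_lipschitzWith' _ M.toNNReal
    (fun t => (T t).lipschitz.weaken (by
      rw [← NNReal.coe_le_coe, coe_nnnorm]; exact (hM t).trans (Real.le_coe_toNNReal M)))
    hc

theorem ofReal_inv_smul {E : Type*} [NormedAddCommGroup E] [NormedSpace ℂ E] (t : ℝ) (v : E) :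
    (t : ℂ)⁻¹ • v = t⁻¹ • v := by
  rw [← Complex.ofReal_inv, Complex.coe_smul]

variable {T : ℝ → X →L[ℂ] X} {M : ℝ} {A : X →ₗ.[ℂ] X}

theorem isGenerator_iff : IsGenerator T A ↔ IsC0Semigroup T ∧
    (∀ x : A.domain, Tendsto (fun t : ℝ => t⁻¹ • (T t x - (x : X))) (𝓝[>] 0) (𝓝 (A x))) ∧
    ∀ x : X, (∃ y, Tendsto (fun t : ℝ => t⁻¹ • (T t x - x)) (𝓝[>] 0) (𝓝 y)) →
      x ∈ A.domain := by
  simp only [IsGenerator, ofReal_inv_smul]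

namespace IsGenerator

theorem tendsto (hA : IsGenerator T A) (x : A.domain) :
    Tendsto (fun t : ℝ => t⁻¹ • (T t x - (x : X))) (𝓝[>] 0) (𝓝 (A x)) :=
  (isGenerator_iff.1 hA).2.1 x

theorem mem_domain (hA : IsGenerator T A) {x y : X}
    (h : Tendsto (fun t : ℝ => t⁻¹ • (T t x - x)) (𝓝[>] 0) (𝓝 y)) : x ∈ A.domain :=
  (isGenerator_iff.1 hA).2.2 x ⟨y, h⟩

theorem apply_eq (hA : IsGenerator T A) {x : A.domain} {y : X}
    (h : Tendsto (fun t : ℝ => t⁻¹ • (T t x - (x : X))) (𝓝[>] 0) (𝓝 y)) : A x = y :=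
  tendsto_nhds_unique (hA.tendsto x) h

theorem congr {T' : ℝ → X →L[ℂ] X} (hA : IsGenerator T A) (h : ∀ t, 0 ≤ t → T' t = T t) :
    IsGenerator T' A := by
  have hev : ∀ x : X, (fun t : ℝ => t⁻¹ • (T' t x - x)) =ᶠ[𝓝[>] 0]
      fun t => t⁻¹ • (T t x - x) := fun x => by
    filter_upwards [self_mem_nhdsWithin] with t (ht : 0 < t)
    rw [h t ht.le]
  obtain ⟨h0, hadd, hcont⟩ := hA.1
  refine isGenerator_iff.2 ⟨⟨?_, fun s t hs ht => ?_, fun x => ?_⟩, fun x => ?_, fun x hx => ?_⟩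
  · rw [h 0 le_rfl, h0]
  · rw [h _ (add_nonneg hs ht), h s hs, h t ht, hadd s t hs ht]
  · exact (hcont x).congr fun t ht => by rw [h t ht]
  · exact (hA.tendsto x).congr' (hev x).symm
  · obtain ⟨y, hy⟩ := hx
    exact hA.mem_domain (hy.congr' (hev x))

end IsGenerator

namespace IsC0Semigroup

theorem apply_add (hT : IsC0Semigroup T) {s t : ℝ} (hs : 0 ≤ s) (ht : 0 ≤ t) (x : X) :
    T (s + t) x = T s (T t x) := by
  rw [hT.2.1 s t hs ht]; rfl

theorem slope_apply_eq (hT : IsC0Semigroup T) {s t : ℝ} (hs : 0 ≤ s) (ht : 0 ≤ t) (hts : t ≠ s)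
    (x : X) :
    slope (fun τ => T τ x) s t = T (min t s) (|t - s|⁻¹ • (T |t - s| x - x)) := by
  rw [slope_def_module, ContinuousLinearMap.map_smul_of_tower, map_sub]
  rcases hts.lt_or_gt with hlt | hgt
  · rw [min_eq_left hlt.le, abs_sub_comm, abs_of_pos (sub_pos.2 hlt),
      ← hT.apply_add ht (sub_pos.2 hlt).le, add_sub_cancel, ← neg_sub s t, inv_neg, neg_smul,
      ← smul_neg, neg_sub]
  · rw [min_eq_right hgt.le, abs_of_pos (sub_pos.2 hgt), ← hT.apply_add hs (sub_pos.2 hgt).le,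
      add_sub_cancel]

end IsC0Semigroup

theorem IsGenerator.hasDerivAt_apply (hA : IsGenerator T A) (hc : ∀ x, Continuous fun t => T t x)
    (hM : ∀ t, ‖T t‖ ≤ M) (y : A.domain) {s : ℝ} (hs : 0 < s) :
    HasDerivAt (fun t => T t y) (T s (A y)) s := by
  rw [hasDerivAt_iff_tendsto_slope]
  have hslope : slope (fun t => T t y) s =ᶠ[𝓝[≠] s]
      fun t => T (min t s) (|t - s|⁻¹ • (T |t - s| y - y)) := by
    filter_upwards [nhdsWithin_le_nhds (Ioi_mem_nhds hs), self_mem_nhdsWithin] with t ht hts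
    exact hA.1.slope_apply_eq hs.le (le_of_lt ht) hts y
  have habs : Tendsto (fun t => |t - s|) (𝓝[≠] s) (𝓝[>] 0) := by
    have h0 : Tendsto (fun t => |t - s|) (𝓝 s) (𝓝 0) := by
      simpa using (continuous_sub_right s).abs.tendsto s
    refine tendsto_nhdsWithin_of_tendsto_nhds_of_eventually_within _
      (h0.mono_left nhdsWithin_le_nhds) ?_
    filter_upwards [self_mem_nhdsWithin] with t ht
    exact abs_pos.2 (sub_ne_zero.2 ht)
  have hmin : Tendsto (fun t => min t s) (𝓝[≠] s) (𝓝 s) := by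
    simpa using ((continuous_id.min (continuous_const (y := s))).tendsto s).mono_left
      nhdsWithin_le_nhds
  exact (tendsto_congr' hslope).2 <|
    ((ContinuousLinearMap.continuous_uncurry_of_norm_le hc hM).tendsto (s, A y)).comp
      (hmin.prodMk_nhds ((hA.tendsto y).comp habs))

theorem setIntegral_Ioi_comp_add_right {E : Type*} [NormedAddCommGroup E] [NormedSpace ℝ E]
    (f : ℝ → E) (t : ℝ) : ∫ s in Ioi 0, f (s + t) = ∫ u in Ioi t, f u := by
  have h := (measurePreserving_add_right volume t).setIntegral_preimage_emb
    (measurableEmbedding_addRight t) f (Ioi t)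
  rwa [show (· + t) ⁻¹' Ioi t = Ioi 0 by ext; simp] at h

theorem integral_exp_neg_mul_Ioi {μ : ℝ} (hμ : 0 < μ) :
    ∫ s in Ioi (0 : ℝ), Real.exp (-μ * s) = μ⁻¹ := by
  rw [integral_exp_mul_Ioi (neg_lt_zero.2 hμ)]
  simp

noncomputable def laplace (T : ℝ → X →L[ℂ] X) (μ : ℝ) (x : X) : X :=
  ∫ s in Ioi 0, Real.exp (-μ * s) • T s x

section Laplace

variable {μ : ℝ}

theorem norm_exp_smul_apply_le (hM : ∀ t, ‖T t‖ ≤ M) (r s : ℝ) (x : X) :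
    ‖Real.exp r • T s x‖ ≤ M * ‖x‖ * Real.exp r := by
  rw [norm_smul, Real.norm_of_nonneg (Real.exp_pos _).le, mul_comm]
  exact mul_le_mul_of_nonneg_right ((T s).le_of_opNorm_le (hM s) x) (Real.exp_pos _).le

theorem integrableOn_exp_smul_apply (hc : ∀ x, Continuous fun t => T t x) (hM : ∀ t, ‖T t‖ ≤ M)
    (hμ : 0 < μ) (x : X) : IntegrableOn (fun s => Real.exp (-μ * s) • T s x) (Ioi 0) :=
  Integrable.mono' ((exp_neg_integrableOn_Ioi 0 hμ).const_mul (M * ‖x‖))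
    ((by fun_prop : Continuous fun s : ℝ => Real.exp (-μ * s)).smul (hc x)).aestronglyMeasurable
    (Eventually.of_forall fun s => norm_exp_smul_apply_le hM _ s x)

theorem norm_laplace_le (hM : ∀ t, ‖T t‖ ≤ M) (hμ : 0 < μ) (x : X) :
    ‖laplace T μ x‖ ≤ M / μ * ‖x‖ := by
  refine (norm_integral_le_of_norm_le ((exp_neg_integrableOn_Ioi 0 hμ).const_mul (M * ‖x‖))
    (Eventually.of_forall fun s => norm_exp_smul_apply_le hM _ s x)).trans_eq ?_
  rw [integral_const_mul, integral_exp_neg_mul_Ioi hμ]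
  ring

theorem laplace_add (hc : ∀ x, Continuous fun t => T t x) (hM : ∀ t, ‖T t‖ ≤ M) (hμ : 0 < μ)
    (x y : X) : laplace T μ (x + y) = laplace T μ x + laplace T μ y := by
  simp only [laplace, map_add, smul_add]
  exact integral_add (integrableOn_exp_smul_apply hc hM hμ x)
    (integrableOn_exp_smul_apply hc hM hμ y)

theorem laplace_smul (c : ℂ) (x : X) : laplace T μ (c • x) = c • laplace T μ x := by
  simp only [laplace, map_smul, smul_comm _ c, integral_smul]

theorem laplace_sub_generator (hA : IsGenerator T A) (hc : ∀ x, Continuous fun t => T t x)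
    (hM : ∀ t, ‖T t‖ ≤ M) (hμ : 0 < μ) (y : A.domain) :
    laplace T μ ((μ : ℂ) • (y : X) - A y) = y := by
  set g : ℝ → X := fun s => -(Real.exp (-μ * s) • T s y)
  have hderiv : ∀ s ∈ Ioi (0 : ℝ),
      HasDerivAt g (Real.exp (-μ * s) • T s ((μ : ℂ) • (y : X) - A y)) s := by
    intro s hs
    have hexp : HasDerivAt (fun s => Real.exp (-μ * s)) (-μ * Real.exp (-μ * s)) s := by
      simpa [mul_comm] using ((hasDerivAt_id s).const_mul (-μ)).exp
    refine (hexp.smul (hA.hasDerivAt_apply hc hM y hs)).neg.congr_deriv ?_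
    rw [map_sub, map_smul, Complex.coe_smul]
    module
  have hlim : Tendsto g atTop (𝓝 0) := by
    refine squeeze_zero_norm (fun s => (norm_neg _).trans_le (norm_exp_smul_apply_le hM _ s y)) ?_
    simpa using (Real.tendsto_exp_atBot.comp
      (tendsto_id.const_mul_atTop_of_neg (neg_lt_zero.2 hμ))).const_mul (M * ‖(y : X)‖)
  have hcont : ContinuousWithinAt g (Ici 0) 0 :=
    ((by fun_prop : Continuous fun s : ℝ => Real.exp (-μ * s)).smul (hc y)).neg.continuousWithinAt
  rw [laplace, integral_Ioi_of_hasDerivAt_of_tendsto hcont hderiv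
    (integrableOn_exp_smul_apply hc hM hμ _) hlim]
  simp [g, hA.1.1]

theorem IsC0Semigroup.apply_laplace (hT : IsC0Semigroup T) (hc : ∀ x, Continuous fun t => T t x)
    (hM : ∀ t, ‖T t‖ ≤ M) (hμ : 0 < μ) {t : ℝ} (ht : 0 ≤ t) (x : X) :
    T t (laplace T μ x) = Real.exp (μ * t) •
      (laplace T μ x - ∫ s in (0 : ℝ)..t, Real.exp (-μ * s) • T s x) := by
  set F : ℝ → X := fun s => Real.exp (-μ * s) • T s x
  have hF : IntegrableOn F (Ioi 0) := integrableOn_exp_smul_apply hc hM hμ x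
  have hsplit : laplace T μ x = (∫ s in (0 : ℝ)..t, F s) + ∫ s in Ioi t, F s := by
    rw [laplace, intervalIntegral.integral_of_le ht, ← setIntegral_union (Ioc_disjoint_Ioi le_rfl)
      measurableSet_Ioi (hF.mono_set Ioc_subset_Ioi_self) (hF.mono_set (Ioi_subset_Ioi ht)),
      Ioc_union_Ioi_eq_Ioi ht]
  calc T t (laplace T μ x) = ∫ s in Ioi 0, Real.exp (μ * t) • F (s + t) := by
        rw [laplace, ← (T t).integral_comp_comm hF]
        refine setIntegral_congr_fun measurableSet_Ioi fun s (hs : 0 < s) => ?_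
        rw [ContinuousLinearMap.map_smul_of_tower, ← hT.apply_add ht hs.le, smul_smul,
          ← Real.exp_add, add_comm t s]
        ring_nf
    _ = Real.exp (μ * t) • ∫ s in Ioi t, F s := by
        rw [integral_smul, setIntegral_Ioi_comp_add_right F t]
    _ = _ := by rw [hsplit, add_sub_cancel_left]

theorem IsGenerator.exists_smul_laplace_sub_apply (hA : IsGenerator T A)
    (hc : ∀ x, Continuous fun t => T t x) (hM : ∀ t, ‖T t‖ ≤ M) (hμ : 0 < μ) (x : X) :
    ∃ h : laplace T μ x ∈ A.domain, (μ : ℂ) • laplace T μ x - A ⟨_, h⟩ = x := by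
  have hderiv : HasDerivAt (fun t => Real.exp (μ * t)) μ 0 := by
    simpa using ((hasDerivAt_id (0 : ℝ)).const_mul μ).exp
  have hexp : Tendsto (fun t : ℝ => t⁻¹ * (Real.exp (μ * t) - 1)) (𝓝[>] 0) (𝓝 μ) := by
    refine ((hasDerivAt_iff_tendsto_slope.1 hderiv).mono_left
      (nhdsWithin_mono _ fun t (ht : 0 < t) => ht.ne')).congr fun t => ?_
    simp [slope_def_field, div_eq_inv_mul]
  have hexp1 : Tendsto (fun t : ℝ => Real.exp (μ * t)) (𝓝[>] 0) (𝓝 1) := by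
    simpa using hderiv.continuousAt.tendsto.mono_left nhdsWithin_le_nhds
  have havg : Tendsto (fun t : ℝ => t⁻¹ • ∫ s in (0 : ℝ)..t, Real.exp (-μ * s) • T s x)
      (𝓝[>] 0) (𝓝 x) := by
    simpa [hA.1.1] using tendsto_inv_smul_integral_of_continuous
      (G := fun p : ℝ × ℝ => Real.exp (-μ * p.2) • T p.2 x) (by fun_prop)
  have hlim : Tendsto (fun t : ℝ => t⁻¹ • (T t (laplace T μ x) - laplace T μ x)) (𝓝[>] 0)
      (𝓝 (μ • laplace T μ x - x)) := by
    have h := (hexp.smul_const (laplace T μ x)).sub (hexp1.smul havg)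
    rw [one_smul] at h
    refine h.congr' ?_
    filter_upwards [self_mem_nhdsWithin] with t (ht : 0 < t)
    rw [hA.1.apply_laplace hc hM hμ ht.le]
    module
  have hmem : laplace T μ x ∈ A.domain := hA.mem_domain hlim
  refine ⟨hmem, ?_⟩
  rw [hA.apply_eq (x := ⟨_, hmem⟩) hlim, Complex.coe_smul, sub_sub_cancel]

theorem IsGenerator.exists_isResolventAt (hA : IsGenerator T A)
    (hc : ∀ x, Continuous fun t => T t x) (hM : ∀ t, ‖T t‖ ≤ M) (hμ : 0 < μ) :
    ∃ R : X →L[ℂ] X, IsResolventAt A (μ : ℂ) R :=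
  ⟨LinearMap.mkContinuous ⟨⟨laplace T μ, laplace_add hc hM hμ⟩, laplace_smul⟩ (M / μ)
    (norm_laplace_le hM hμ), hA.exists_smul_laplace_sub_apply hc hM hμ,
    laplace_sub_generator hA hc hM hμ⟩

end Laplace

theorem tendsto_smul_laplace (hT0 : T 0 = 1) (hc : ∀ x, Continuous fun t => T t x)
    (hM : ∀ t, ‖T t‖ ≤ M) (x : X) : Tendsto (fun μ : ℝ => μ • laplace T μ x) atTop (𝓝 x) := by
  have hrescale : ∀ μ : ℝ, 0 < μ →
      ∫ u in Ioi 0, Real.exp (-u) • T (μ⁻¹ * u) x = μ • laplace T μ x := by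
    intro μ hμ
    have h := integral_comp_mul_left_Ioi (fun s => Real.exp (-μ * s) • T s x) 0 (inv_pos.2 hμ)
    rw [inv_inv, mul_zero] at h
    rw [laplace, ← h]
    refine setIntegral_congr_fun measurableSet_Ioi fun u _ => ?_
    rw [← mul_assoc, neg_mul, mul_inv_cancel₀ hμ.ne', neg_one_mul]
  have hdct : Tendsto (fun μ : ℝ => ∫ u in Ioi 0, Real.exp (-u) • T (μ⁻¹ * u) x) atTop
      (𝓝 (∫ u in Ioi (0 : ℝ), Real.exp (-u) • x)) := by
    refine tendsto_integral_filter_of_dominated_convergence (fun u => M * ‖x‖ * Real.exp (-u))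
      (Eventually.of_forall fun μ => ?_) (Eventually.of_forall fun μ => ?_) ?_ ?_
    · exact ((by fun_prop : Continuous fun u : ℝ => Real.exp (-u)).smul
        ((hc x).comp (continuous_const_mul μ⁻¹))).aestronglyMeasurable
    · exact Eventually.of_forall fun u => norm_exp_smul_apply_le hM _ _ x
    · have hexp : IntegrableOn (fun u : ℝ => Real.exp (-u)) (Ioi 0) := by
        simpa using exp_neg_integrableOn_Ioi 0 one_pos
      exact hexp.const_mul _
    · refine Eventually.of_forall fun u => tendsto_const_nhds.smul ?_
      have hu : Tendsto (fun μ : ℝ => μ⁻¹ * u) atTop (𝓝 0) := by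
        simpa using tendsto_inv_atTop_zero.mul_const u
      have h := ((hc x).tendsto 0).comp hu
      rwa [Function.comp_def, hT0, one_apply_eq_self] at h
  rw [integral_smul_const, integral_exp_neg_Ioi_zero, one_smul] at hdct
  exact hdct.congr' ((eventually_gt_atTop 0).mono hrescale)

theorem IsGenerator.dense_domain (hA : IsGenerator T A) (hc : ∀ x, Continuous fun t => T t x)
    (hM : ∀ t, ‖T t‖ ≤ M) : Dense (A.domain : Set X) := fun x =>
  mem_closure_of_tendsto (tendsto_smul_laplace hA.1.1 hc hM x)
    ((eventually_gt_atTop 0).mono fun μ hμ =>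
      A.domain.smul_of_tower_mem μ (hA.exists_smul_laplace_sub_apply hc hM hμ x).1)

theorem LinearPMap.exists_extension_of_dense {𝕜 E F : Type*} [NontriviallyNormedField 𝕜]
    [NormedAddCommGroup E] [NormedSpace 𝕜 E] [NormedAddCommGroup F] [NormedSpace 𝕜 F]
    [CompleteSpace F] {C : E →ₗ.[𝕜] F} {D : Submodule 𝕜 E} (hD : Dense (D : Set E))
    (hDC : D ≤ C.domain) {K : ℝ} (hK : 0 ≤ K) (hCK : ∀ y : D, ‖C ⟨y, hDC y.2⟩‖ ≤ K * ‖(y : E)‖) :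
    ∃ B : E →L[𝕜] F, ‖B‖ ≤ K ∧ ∀ y : D, B y = C ⟨y, hDC y.2⟩ := by
  have hdense : DenseRange D.subtype := by
    rwa [DenseRange, Submodule.coe_subtype, Subtype.range_coe]
  exact ⟨(C.toFun.comp (Submodule.inclusion hDC)).extendOfNorm D.subtype,
    LinearMap.opNorm_extendOfNorm_le hdense hK hCK, LinearMap.extendOfNorm_eq hdense ⟨K, hCK⟩⟩

theorem IsGenerator.norm_apply_le_of_norm_comp_resolvent_le (hA : IsGenerator T A)
    (hc : ∀ x, Continuous fun t => T t x) (hM : ∀ t, ‖T t‖ ≤ M) {C : X →ₗ.[ℂ] X} {K : ℝ}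
    (hK : 0 ≤ K) (hdom : A.domain ≤ C.domain)
    (hCR : ∀ μ : ℝ, 0 < μ → ∀ R : X →L[ℂ] X, IsResolventAt A (μ : ℂ) R →
      ∀ x : X, ∀ hx : R x ∈ C.domain, ‖C ⟨R x, hx⟩‖ ≤ K / μ * ‖x‖) (y : A.domain) :
    ‖C ⟨y, hdom y.2⟩‖ ≤ K * ‖(y : X)‖ := by
  have hbound : ∀ μ : ℝ, 0 < μ → ‖C ⟨y, hdom y.2⟩‖ ≤ K * ‖(y : X)‖ + K / μ * ‖A y‖ := by
    intro μ hμ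
    obtain ⟨R, hR⟩ := hA.exists_isResolventAt hc hM hμ
    have hRy : R ((μ : ℂ) • (y : X) - A y) = y := hR.2 y
    have hmem : R ((μ : ℂ) • (y : X) - A y) ∈ C.domain := by
      rw [hRy]; exact hdom y.2
    have hCy : C ⟨_, hmem⟩ = C ⟨y, hdom y.2⟩ := congrArg C (Subtype.ext hRy)
    calc ‖C ⟨y, hdom y.2⟩‖ ≤ K / μ * ‖(μ : ℂ) • (y : X) - A y‖ := hCy ▸ hCR μ hμ R hR _ hmem
      _ ≤ K / μ * (μ * ‖(y : X)‖ + ‖A y‖) := by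
          gcongr
          refine (norm_sub_le _ _).trans_eq ?_
          rw [norm_smul, Complex.norm_real, Real.norm_of_nonneg hμ.le]
      _ = K * ‖(y : X)‖ + K / μ * ‖A y‖ := by field_simp
  have hlim : Tendsto (fun μ : ℝ => K * ‖(y : X)‖ + K / μ * ‖A y‖) atTop
      (𝓝 (K * ‖(y : X)‖)) := by
    simpa using tendsto_const_nhds.add ((tendsto_const_nhds.div_atTop tendsto_id).mul_const ‖A y‖)
  exact ge_of_tendsto hlim ((eventually_gt_atTop 0).mono hbound)

noncomputable def duhamel (T : ℝ → X →L[ℂ] X) (B : X →L[ℂ] X) (f : ℝ → X) (t : ℝ) : X :=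
  ∫ s in (0 : ℝ)..t, T (t - s) (B (f s))

section Duhamel

variable {B : X →L[ℂ] X} {f g : ℝ → X}

theorem continuous_duhamel_integrand (hc : ∀ x, Continuous fun t => T t x) (hM : ∀ t, ‖T t‖ ≤ M)
    (hf : Continuous f) : Continuous fun p : ℝ × ℝ => T (p.1 - p.2) (B (f p.2)) :=
  (ContinuousLinearMap.continuous_uncurry_of_norm_le hc hM).comp
    ((continuous_fst.sub continuous_snd).prodMk (B.continuous.comp (hf.comp continuous_snd)))

theorem intervalIntegrable_duhamel_integrand (hc : ∀ x, Continuous fun t => T t x)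
    (hM : ∀ t, ‖T t‖ ≤ M) (hf : Continuous f) (t : ℝ) :
    IntervalIntegrable (fun s => T (t - s) (B (f s))) volume 0 t :=
  ((continuous_duhamel_integrand hc hM hf).comp (Continuous.prodMk_right t)).intervalIntegrable _ _

theorem continuous_duhamel (hc : ∀ x, Continuous fun t => T t x) (hM : ∀ t, ‖T t‖ ≤ M)
    (hf : Continuous f) : Continuous (duhamel T B f) :=
  intervalIntegral.continuous_parametric_intervalIntegral_of_continuous
    (continuous_duhamel_integrand hc hM hf) continuous_id

theorem duhamel_add (hc : ∀ x, Continuous fun t => T t x) (hM : ∀ t, ‖T t‖ ≤ M)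
    (hf : Continuous f) (hg : Continuous g) (t : ℝ) :
    duhamel T B (f + g) t = duhamel T B f t + duhamel T B g t := by
  simp only [duhamel, Pi.add_apply, map_add]
  exact intervalIntegral.integral_add (intervalIntegrable_duhamel_integrand hc hM hf t)
    (intervalIntegrable_duhamel_integrand hc hM hg t)

theorem duhamel_sub (hc : ∀ x, Continuous fun t => T t x) (hM : ∀ t, ‖T t‖ ≤ M)
    (hf : Continuous f) (hg : Continuous g) (t : ℝ) :
    duhamel T B (f - g) t = duhamel T B f t - duhamel T B g t := by
  simp only [duhamel, Pi.sub_apply, map_sub]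
  exact intervalIntegral.integral_sub (intervalIntegrable_duhamel_integrand hc hM hf t)
    (intervalIntegrable_duhamel_integrand hc hM hg t)

theorem duhamel_smul (c : ℂ) (t : ℝ) : duhamel T B (c • f) t = c • duhamel T B f t := by
  simp only [duhamel, Pi.smul_apply, map_smul, intervalIntegral.integral_smul]

theorem norm_duhamel_le (hM : ∀ t, ‖T t‖ ≤ M) {ρ : ℝ → ℝ} {t : ℝ} (ht : 0 ≤ t)
    (hρ : IntervalIntegrable ρ volume 0 t) (hfρ : ∀ s ∈ Ioc 0 t, ‖f s‖ ≤ ρ s) :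
    ‖duhamel T B f t‖ ≤ M * ‖B‖ * ∫ s in (0 : ℝ)..t, ρ s := by
  have hM0 : 0 ≤ M := (norm_nonneg _).trans (hM 0)
  rw [duhamel, ← intervalIntegral.integral_const_mul]
  refine intervalIntegral.norm_integral_le_of_norm_le ht (ae_of_all _ fun s hs => ?_)
    (hρ.const_mul _)
  calc ‖T (t - s) (B (f s))‖ ≤ M * (‖B‖ * ‖f s‖) :=
        ((T _).le_of_opNorm_le (hM _) _).trans (by gcongr; exact B.le_opNorm _)
    _ ≤ M * ‖B‖ * ρ s := by rw [← mul_assoc]; gcongr; exact hfρ s hs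

theorem tendsto_inv_smul_duhamel (hT0 : T 0 = 1) (hc : ∀ x, Continuous fun t => T t x)
    (hM : ∀ t, ‖T t‖ ≤ M) (hf : Continuous f) :
    Tendsto (fun t : ℝ => t⁻¹ • duhamel T B f t) (𝓝[>] 0) (𝓝 (B (f 0))) := by
  simpa [duhamel, hT0] using
    tendsto_inv_smul_integral_of_continuous (continuous_duhamel_integrand hc hM hf)

theorem IsC0Semigroup.duhamel_add_right (hT : IsC0Semigroup T)
    (hc : ∀ x, Continuous fun t => T t x) (hM : ∀ t, ‖T t‖ ≤ M) (hf : Continuous f) {τ t : ℝ}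
    (hτ : 0 ≤ τ) (ht : 0 ≤ t) :
    duhamel T B f (τ + t) = T τ (duhamel T B f t) + duhamel T B (fun s => f (s + t)) τ := by
  have hint := intervalIntegrable_duhamel_integrand (B := B) hc hM hf (τ + t)
  rw [duhamel, ← intervalIntegral.integral_add_adjacent_intervals (b := t)
    (hint.mono_set (by rw [uIcc_of_le ht, uIcc_of_le (by linarith)]; gcongr; linarith))
    (hint.mono_set (by rw [uIcc_of_le (by linarith), uIcc_of_le (by linarith)]; gcongr))]
  congr 1
  · rw [duhamel, ← (T τ).intervalIntegral_comp_comm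
      (intervalIntegrable_duhamel_integrand hc hM hf t)]
    refine intervalIntegral.integral_congr fun s hs => ?_
    rw [uIcc_of_le ht] at hs
    rw [← hT.apply_add hτ (sub_nonneg.2 hs.2), add_sub_assoc]
  · have h := intervalIntegral.integral_comp_add_right (a := 0) (b := τ)
      (fun u => T (τ + t - u) (B (f u))) t
    rw [zero_add] at h
    simp only [← h, duhamel, add_sub_add_right_eq_sub]

end Duhamel

/-- The terms of the Dyson–Phillips series. The cut-off at `max t 0` makes the bound
`norm_dysonTerm_le` hold on all of `ℝ`, so that the series converges locally uniformly there. -/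
noncomputable def dysonTerm (T : ℝ → X →L[ℂ] X) (B : X →L[ℂ] X) : ℕ → ℝ → X → X
  | 0, t, x => T t x
  | n + 1, t, x => duhamel T B (fun s => dysonTerm T B n s x) (max t 0)

noncomputable def dysonSeries (T : ℝ → X →L[ℂ] X) (B : X →L[ℂ] X) (t : ℝ) (x : X) : X :=
  ∑' n, dysonTerm T B n t x

section Dyson

open Nat

variable {B : X →L[ℂ] X}

theorem continuous_dysonTerm (hc : ∀ x, Continuous fun t => T t x) (hM : ∀ t, ‖T t‖ ≤ M)
    (n : ℕ) (x : X) : Continuous fun t => dysonTerm T B n t x := by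
  induction n with
  | zero => exact hc x
  | succ n ih => exact (continuous_duhamel hc hM ih).comp (continuous_id.max continuous_const)

theorem dysonTerm_add (hc : ∀ x, Continuous fun t => T t x) (hM : ∀ t, ‖T t‖ ≤ M) (n : ℕ)
    (t : ℝ) (x y : X) : dysonTerm T B n t (x + y) = dysonTerm T B n t x + dysonTerm T B n t y := by
  induction n generalizing t with
  | zero => exact map_add _ _ _
  | succ n ih =>
    simp only [dysonTerm, ih]
    exact duhamel_add hc hM (continuous_dysonTerm hc hM n x) (continuous_dysonTerm hc hM n y) _

theorem dysonTerm_smul (n : ℕ) (t : ℝ) (c : ℂ) (x : X) :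
    dysonTerm T B n t (c • x) = c • dysonTerm T B n t x := by
  induction n generalizing t with
  | zero => exact map_smul _ _ _
  | succ n ih =>
    simp only [dysonTerm, ih]
    exact duhamel_smul c _

theorem norm_dysonTerm_le (hM : ∀ t, ‖T t‖ ≤ M) (n : ℕ) (t : ℝ) (x : X) :
    ‖dysonTerm T B n t x‖ ≤ M * (M * ‖B‖ * max t 0) ^ n / n ! * ‖x‖ := by
  induction n generalizing t with
  | zero => simpa [dysonTerm] using (T t).le_of_opNorm_le (hM t) x
  | succ n ih =>
    have hpow : (fun s => M * (M * ‖B‖ * s) ^ n / n ! * ‖x‖)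
        = fun s => M * (M * ‖B‖) ^ n / n ! * ‖x‖ * s ^ n := by
      ext s; ring
    refine (norm_duhamel_le hM (le_max_right t 0)
      (ρ := fun s => M * (M * ‖B‖ * s) ^ n / n ! * ‖x‖)
      (Continuous.intervalIntegrable (by fun_prop) _ _)
      fun s hs => by simpa only [max_eq_left hs.1.le] using ih s).trans_eq ?_
    rw [hpow, intervalIntegral.integral_const_mul, integral_pow, factorial_succ]
    push_cast
    field_simp
    ring

theorem summable_dysonTerm_bound (t : ℝ) (x : X) :
    Summable fun n : ℕ => M * (M * ‖B‖ * max t 0) ^ n / n ! * ‖x‖ := by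
  simpa only [mul_div_assoc] using
    ((Real.summable_pow_div_factorial (M * ‖B‖ * max t 0)).mul_left M).mul_right ‖x‖

theorem hasSum_dysonTerm (hM : ∀ t, ‖T t‖ ≤ M) (t : ℝ) (x : X) :
    HasSum (fun n => dysonTerm T B n t x) (dysonSeries T B t x) :=
  (summable_dysonTerm_bound t x |>.of_norm_bounded fun n => norm_dysonTerm_le hM n t x).hasSum

theorem norm_dysonSeries_le (hM : ∀ t, ‖T t‖ ≤ M) (t : ℝ) (x : X) :
    ‖dysonSeries T B t x‖ ≤ M * Real.exp (M * ‖B‖ * max t 0) * ‖x‖ := by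
  have hexp : HasSum (fun n : ℕ => (M * ‖B‖ * max t 0) ^ n / n !)
      (Real.exp (M * ‖B‖ * max t 0)) := by
    rw [Real.exp_eq_exp_ℝ]; exact NormedSpace.expSeries_div_hasSum_exp _
  refine (hasSum_dysonTerm hM t x).norm_le_of_bounded ?_ fun n => norm_dysonTerm_le hM n t x
  simpa only [mul_div_assoc] using (hexp.mul_left M).mul_right ‖x‖

theorem continuous_dysonSeries (hc : ∀ x, Continuous fun t => T t x) (hM : ∀ t, ‖T t‖ ≤ M)
    (x : X) : Continuous fun t => dysonSeries T B t x := by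
  have hM0 : 0 ≤ M := (norm_nonneg _).trans (hM 0)
  refine continuous_iff_continuousAt.2 fun t₀ =>
    ContinuousOn.continuousAt ?_ (Iic_mem_nhds (lt_add_one t₀))
  refine continuousOn_tsum (fun n => (continuous_dysonTerm hc hM n x).continuousOn)
    (summable_dysonTerm_bound (M := M) (B := B) (t₀ + 1) x) fun n t (ht : t ≤ t₀ + 1) => ?_
  exact (norm_dysonTerm_le hM n t x).trans (by gcongr)

theorem dysonSeries_eq_add_duhamel (hc : ∀ x, Continuous fun t => T t x) (hM : ∀ t, ‖T t‖ ≤ M)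
    {t : ℝ} (ht : 0 ≤ t) (x : X) :
    dysonSeries T B t x = T t x + duhamel T B (fun s => dysonSeries T B s x) t := by
  have hM0 : 0 ≤ M := (norm_nonneg _).trans (hM 0)
  have hsum : HasSum (fun n => dysonTerm T B (n + 1) t x)
      (duhamel T B (fun s => dysonSeries T B s x) t) := by
    simp only [dysonTerm, max_eq_left ht, duhamel]
    refine intervalIntegral.hasSum_integral_of_dominated_convergence
      (fun n _ => M * ‖B‖ * (M * (M * ‖B‖ * t) ^ n / n ! * ‖x‖))
      (fun n => ((continuous_duhamel_integrand hc hM (continuous_dysonTerm hc hM n x)).comp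
        (Continuous.prodMk_right t)).aestronglyMeasurable)
      (fun n => ae_of_all _ fun s hs => ?_)
      (ae_of_all _ fun _ _ => (summable_dysonTerm_bound (B := B) t x).mul_left _ |>.congr
        fun n => by rw [max_eq_left ht])
      intervalIntegrable_const
      (ae_of_all _ fun s _ => (hasSum_dysonTerm hM s x).mapL ((T (t - s)).comp B))
    rw [uIoc_of_le ht] at hs
    calc ‖T (t - s) (B (dysonTerm T B n s x))‖ ≤ M * (‖B‖ * ‖dysonTerm T B n s x‖) :=
          ((T _).le_of_opNorm_le (hM _) _).trans (by gcongr; exact B.le_opNorm _)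
      _ ≤ M * (‖B‖ * (M * (M * ‖B‖ * t) ^ n / n ! * ‖x‖)) := by
          gcongr
          refine (norm_dysonTerm_le hM n s x).trans ?_
          rw [max_eq_left hs.1.le]
          gcongr
          exacts [mul_nonneg (mul_nonneg hM0 (norm_nonneg _)) hs.1.le, hs.2]
      _ = _ := by ring
  rw [dysonSeries, (hasSum_dysonTerm hM t x).summable.tsum_eq_zero_add, hsum.tsum_eq]
  rfl

theorem exists_eq_dysonSeries (hc : ∀ x, Continuous fun t => T t x) (hM : ∀ t, ‖T t‖ ≤ M) :
    ∃ S : ℝ → X →L[ℂ] X, (∀ t x, S t x = dysonSeries T B t x) ∧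
      ∀ t, 0 ≤ t → ‖S t‖ ≤ M * Real.exp (M * ‖B‖ * t) := by
  have hM0 : 0 ≤ M := (norm_nonneg _).trans (hM 0)
  have hadd : ∀ t x y, dysonSeries T B t (x + y) = dysonSeries T B t x + dysonSeries T B t y :=
    fun t x y => (hasSum_dysonTerm hM t (x + y)).unique <| by
      simpa only [dysonTerm_add hc hM] using (hasSum_dysonTerm hM t x).add (hasSum_dysonTerm hM t y)
  have hsmul : ∀ t (c : ℂ) x, dysonSeries T B t (c • x) = c • dysonSeries T B t x :=
    fun t c x => (hasSum_dysonTerm hM t (c • x)).unique <| by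
      simpa only [dysonTerm_smul] using (hasSum_dysonTerm hM t x).const_smul c
  refine ⟨fun t => LinearMap.mkContinuous ⟨⟨dysonSeries T B t, hadd t⟩, hsmul t⟩ _
    (norm_dysonSeries_le hM t), fun _ _ => rfl, fun t ht => ?_⟩
  simpa only [max_eq_left ht] using LinearMap.mkContinuous_norm_le _ (by positivity) _

end Dyson

section VariationOfConstants

variable {B : X →L[ℂ] X} {S : ℝ → X →L[ℂ] X}

theorem eq_of_eq_add_duhamel (hc : ∀ x, Continuous fun t => T t x) (hM : ∀ t, ‖T t‖ ≤ M)
    {V W : ℝ → X} (hV : Continuous V) (hW : Continuous W) {y : X}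
    (hVeq : ∀ t, 0 ≤ t → V t = T t y + duhamel T B V t)
    (hWeq : ∀ t, 0 ≤ t → W t = T t y + duhamel T B W t) {t : ℝ} (ht : 0 ≤ t) : V t = W t := by
  refine sub_eq_zero.1 (eq_zero_of_norm_le_mul_integral_norm (u := V - W) (L := M * ‖B‖)
    (hV.sub hW) (fun s hs => ?_) t ⟨ht, le_rfl⟩)
  have hs' : (V - W) s = duhamel T B (V - W) s := by
    rw [duhamel_sub hc hM hV hW, Pi.sub_apply, hVeq s hs.1, hWeq s hs.1, add_sub_add_left_eq_sub]
  rw [hs']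
  exact norm_duhamel_le hM hs.1 ((hV.sub hW).norm.intervalIntegrable _ _) fun _ _ => le_rfl

theorem IsC0Semigroup.of_eq_add_duhamel (hT : IsC0Semigroup T)
    (hc : ∀ x, Continuous fun t => T t x) (hM : ∀ t, ‖T t‖ ≤ M)
    (hSc : ∀ x, Continuous fun t => S t x)
    (hS : ∀ t, 0 ≤ t → ∀ x, S t x = T t x + duhamel T B (fun s => S s x) t) :
    IsC0Semigroup S := by
  refine ⟨?_, fun s t hs ht => ?_, fun x => (hSc x).continuousOn⟩
  · ext x
    simp [hS 0 le_rfl, duhamel, hT.1]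
  · ext x
    refine eq_of_eq_add_duhamel hc hM ((hSc x).comp (continuous_add_const t)) (hSc (S t x))
      (fun τ hτ => ?_) (fun τ hτ => hS τ hτ (S t x)) hs
    show S (τ + t) x = T τ (S t x) + duhamel T B (fun s => S (s + t) x) τ
    rw [hS _ (add_nonneg hτ ht), hT.duhamel_add_right hc hM (hSc x) hτ ht, hS t ht, map_add,
      hT.apply_add hτ ht, add_assoc]

theorem IsGenerator.of_eq_add_duhamel (hA : IsGenerator T A)
    (hc : ∀ x, Continuous fun t => T t x) (hM : ∀ t, ‖T t‖ ≤ M)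
    (hSc : ∀ x, Continuous fun t => S t x)
    (hS : ∀ t, 0 ≤ t → ∀ x, S t x = T t x + duhamel T B (fun s => S s x) t)
    {C : X →ₗ.[ℂ] X} (hdom : A.domain ≤ C.domain) (hBC : ∀ y : A.domain, B y = C ⟨y, hdom y.2⟩) :
    IsGenerator S (A + C) := by
  have hS' := hA.1.of_eq_add_duhamel hc hM hSc hS
  have hsplit : ∀ x, (fun t : ℝ => t⁻¹ • (S t x - x)) =ᶠ[𝓝[>] 0]
      fun t => t⁻¹ • (T t x - x) + t⁻¹ • duhamel T B (fun s => S s x) t := fun x => by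
    filter_upwards [self_mem_nhdsWithin] with t (ht : 0 < t)
    rw [hS t ht.le x, ← smul_add, add_sub_right_comm]
  have hB : ∀ x, Tendsto (fun t : ℝ => t⁻¹ • duhamel T B (fun s => S s x) t) (𝓝[>] 0)
      (𝓝 (B x)) := fun x => by
    simpa [hS'.1] using tendsto_inv_smul_duhamel hA.1.1 hc hM (hSc x)
  refine isGenerator_iff.2 ⟨hS', fun x => ?_, fun x ⟨y, hy⟩ => ?_⟩
  · have hx : (x : X) ∈ A.domain := x.2.1
    rw [LinearPMap.add_apply, ← hBC ⟨x, hx⟩]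
    exact ((hA.tendsto ⟨x, hx⟩).add (hB x)).congr' (hsplit x).symm
  · have hxA : x ∈ A.domain := hA.mem_domain <| (hy.sub (hB x)).congr' <| by
      filter_upwards [hsplit x] with t ht
      rw [ht, add_sub_cancel_right]
    exact ⟨hxA, hdom hxA⟩

end VariationOfConstants

theorem perturbation_bounded_semigroup_case_general
    {X : Type*} [NormedAddCommGroup X] [NormedSpace ℂ X] [CompleteSpace X]
    (A C : X →ₗ.[ℂ] X) (T : ℝ → X →L[ℂ] X) (M K : ℝ)
    (hgen : IsGenerator T A)
    (hbound : ∀ t : ℝ, 0 ≤ t → ‖T t‖ ≤ M)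
    (hdom : A.domain ≤ C.domain)
    (hK : 0 < K)
    (hCR : ∀ μ : ℝ, 0 < μ → ∀ R : X →L[ℂ] X, IsResolventAt A (μ : ℂ) R →
      ∀ x : X, ∀ hx : R x ∈ C.domain, ‖C ⟨R x, hx⟩‖ ≤ K / μ * ‖x‖) :
    ∃ S : ℝ → X →L[ℂ] X, IsGenerator S (A + C) ∧
      ∀ t : ℝ, 0 ≤ t → ‖S t‖ ≤ M * Real.exp (M * K * t) := by
  set T' : ℝ → X →L[ℂ] X := fun t => T (max t 0)
  have hA : IsGenerator T' A := hgen.congr fun t ht => by simp only [T', max_eq_left ht]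
  have hc : ∀ x, Continuous fun t => T' t x := fun x =>
    (hgen.1.2.2 x).comp_continuous (continuous_id.max continuous_const) fun t => le_max_right t 0
  have hM : ∀ t, ‖T' t‖ ≤ M := fun t => hbound _ (le_max_right t 0)
  obtain ⟨B, hBK, hBC⟩ := LinearPMap.exists_extension_of_dense (hA.dense_domain hc hM) hdom hK.le
    (hA.norm_apply_le_of_norm_comp_resolvent_le hc hM hK.le hdom hCR)
  obtain ⟨S, hS, hSM⟩ := exists_eq_dysonSeries (B := B) hc hM
  refine ⟨S, hA.of_eq_add_duhamel hc hM (fun x => ?_) (fun t ht x => ?_) hdom hBC,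
    fun t ht => (hSM t ht).trans ?_⟩
  · simpa only [hS] using continuous_dysonSeries hc hM x
  · simpa only [hS] using dysonSeries_eq_add_duhamel hc hM ht x
  · have hM0 : 0 ≤ M := (norm_nonneg _).trans (hM 0)
    gcongr

/-- If `A` generates a bounded C₀-semigroup, `‖T_A(t)‖ ≤ M`, and `C` satisfies
`D(A) ⊆ D(C)` with `‖C R(μ,A)‖ ≤ K/μ` for `μ > 0`, then `A + C` generates a
C₀-semigroup with `‖T_{A+C}(t)‖ ≤ M e^{MKt}`. -/
theorem perturbation_bounded_semigroup_case
    {X : Type*} [NormedAddCommGroup X] [NormedSpace ℂ X] [CompleteSpace X]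
    (A C : X →ₗ.[ℂ] X) (T : ℝ → X →L[ℂ] X) (M K : ℝ)
    (hM : 1 ≤ M)
    (hgen : IsGenerator T A)
    (hbound : ∀ t : ℝ, 0 ≤ t → ‖T t‖ ≤ M)
    (hdom : A.domain ≤ C.domain)
    (hK : 0 < K)
    (hCR : ∀ μ : ℝ, 0 < μ → ∀ R : X →L[ℂ] X, IsResolventAt A (μ : ℂ) R →
      ∀ x : X, ∀ hx : R x ∈ C.domain, ‖C ⟨R x, hx⟩‖ ≤ K / μ * ‖x‖) :
    ∃ S : ℝ → X →L[ℂ] X, IsGenerator S (A + C) ∧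
      ∀ t : ℝ, 0 ≤ t → ‖S t‖ ≤ M * Real.exp (M * K * t) :=
  perturbation_bounded_semigroup_case_general A C T M K hgen hbound hdom hK hCR
end

section
/- Let A generate a C₀-semigroup on X with ‖T_A(t)‖ ≤ Me^{ωt}, and let C ∈ GL_A(X) with norm ‖C‖_A := (1/M) sup_{μ>ω}(μ−ω)‖C R(μ,A)‖. Then for every μ > ω + M²‖C‖_A, μ ∈ ρ(A+C) and ‖R(μ, A+C)‖ ≤ M/(μ − (ω + M²‖C‖_A)). -/
/-!
For `μ > ω` the resolvent `R(μ, A)` is the Laplace transform `∫₀^∞ e^{-μt} T(t) dt`, which gives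
the Hille–Yosida estimate `‖R(μ, A)‖ ≤ M / (μ - ω)`. Since `μ - A - C = (1 - C R(μ, A)) (μ - A)`
and, by the definition of `‖C‖_A`, `(μ - ω) ‖C R(μ, A)‖ ≤ M ‖C‖_A ≤ M² ‖C‖_A < μ - ω`, the
Neumann series inverts `1 - C R(μ, A)`, and `R(μ, A + C) = R(μ, A) (1 - C R(μ, A))⁻¹` has norm at
most `M / ((μ - ω) (1 - ‖C R(μ, A)‖)) ≤ M / (μ - ω - M² ‖C‖_A)`.
-/

open Filter Topology

variable {X : Type*} [NormedAddCommGroup X] [NormedSpace ℂ X] [CompleteSpace X]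

open MeasureTheory Set

section Laplace

theorem tendsto_inv_smul_intervalIntegral_zero {V : Type*} [NormedAddCommGroup V]
    [NormedSpace ℝ V] [CompleteSpace V] {f : ℝ → V} (hf : ContinuousOn f (Ici 0)) :
    Tendsto (fun t : ℝ => t⁻¹ • ∫ s in (0 : ℝ)..t, f s) (𝓝[>] 0) (𝓝 (f 0)) := by
  have hderiv : HasDerivWithinAt (fun t => ∫ s in (0 : ℝ)..t, f s) (f 0) (Ici 0) 0 :=
    intervalIntegral.integral_hasDerivWithinAt_right IntervalIntegrable.refl
      ⟨Ioi 0, self_mem_nhdsWithin, (hf.mono Ioi_subset_Ici_self).aestronglyMeasurable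
        measurableSet_Ioi⟩
      ((hf 0 self_mem_Ici).mono Ioi_subset_Ici_self)
  have h := hasDerivWithinAt_iff_tendsto_slope.mp hderiv
  rw [Ici_sdiff_left] at h
  refine h.congr fun t => ?_
  simp [slope_def_module]

variable {E : Type*} [NormedAddCommGroup E] [NormedSpace ℂ E] {T : ℝ → E →L[ℂ] E} {M ω μ : ℝ}

noncomputable def semigroupLaplace (T : ℝ → E →L[ℂ] E) (μ : ℝ) (x : E) : E :=
  ∫ t in Ioi 0, Real.exp (-μ * t) • T t x

theorem IsC0Semigroup.continuousOn_exp_smul (hT : IsC0Semigroup T) (μ : ℝ) (x : E) :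
    ContinuousOn (fun t => Real.exp (-μ * t) • T t x) (Ici 0) :=
  (by fun_prop : Continuous fun t : ℝ => Real.exp (-μ * t)).continuousOn.smul (hT.2.2 x)

theorem norm_exp_smul_apply_le_s18 (hbound : ∀ t : ℝ, 0 ≤ t → ‖T t‖ ≤ M * Real.exp (ω * t))
    (x : E) {t : ℝ} (ht : 0 ≤ t) :
    ‖Real.exp (-μ * t) • T t x‖ ≤ M * ‖x‖ * Real.exp (-(μ - ω) * t) :=
  calc ‖Real.exp (-μ * t) • T t x‖ = Real.exp (-μ * t) * ‖T t x‖ := by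
        rw [norm_smul, Real.norm_of_nonneg (Real.exp_pos _).le]
    _ ≤ Real.exp (-μ * t) * (M * Real.exp (ω * t) * ‖x‖) := by
        gcongr
        exact (T t).le_of_opNorm_le (hbound t ht) x
    _ = M * ‖x‖ * Real.exp (-(μ - ω) * t) := by
        rw [show -(μ - ω) * t = ω * t + -μ * t by ring, Real.exp_add]
        ring

theorem IsC0Semigroup.integrableOn_exp_smul (hT : IsC0Semigroup T)
    (hbound : ∀ t : ℝ, 0 ≤ t → ‖T t‖ ≤ M * Real.exp (ω * t)) (hμ : ω < μ) (x : E) :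
    IntegrableOn (fun t => Real.exp (-μ * t) • T t x) (Ioi 0) := by
  refine Integrable.mono' ((exp_neg_integrableOn_Ioi 0 (sub_pos.2 hμ)).const_mul (M * ‖x‖))
    ((hT.continuousOn_exp_smul μ x).mono Ioi_subset_Ici_self |>.aestronglyMeasurable
      measurableSet_Ioi) ?_
  filter_upwards [ae_restrict_mem measurableSet_Ioi] with t ht
  exact norm_exp_smul_apply_le_s18 hbound x (le_of_lt ht)

theorem norm_semigroupLaplace_le (hbound : ∀ t : ℝ, 0 ≤ t → ‖T t‖ ≤ M * Real.exp (ω * t))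
    (hμ : ω < μ) (x : E) :
    ‖semigroupLaplace T μ x‖ ≤ M / (μ - ω) * ‖x‖ := by
  have hexp : ∫ t in Ioi (0 : ℝ), Real.exp (-(μ - ω) * t) = (μ - ω)⁻¹ := by
    rw [integral_exp_mul_Ioi (by linarith) 0]
    field_simp
    simp
  calc ‖semigroupLaplace T μ x‖
      ≤ ∫ t in Ioi (0 : ℝ), M * ‖x‖ * Real.exp (-(μ - ω) * t) := by
        refine norm_integral_le_of_norm_le
          ((exp_neg_integrableOn_Ioi 0 (sub_pos.2 hμ)).const_mul _) ?_
        filter_upwards [ae_restrict_mem measurableSet_Ioi] with t ht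
        exact norm_exp_smul_apply_le_s18 hbound x (le_of_lt ht)
    _ = M / (μ - ω) * ‖x‖ := by
        rw [integral_const_mul, hexp]
        ring

theorem IsC0Semigroup.apply_semigroupLaplace [CompleteSpace E] (hT : IsC0Semigroup T)
    (hbound : ∀ t : ℝ, 0 ≤ t → ‖T t‖ ≤ M * Real.exp (ω * t)) (hμ : ω < μ) (x : E) {t : ℝ}
    (ht : 0 < t) :
    T t (semigroupLaplace T μ x) = Real.exp (μ * t) •
      (semigroupLaplace T μ x - ∫ s in (0 : ℝ)..t, Real.exp (-μ * s) • T s x) := by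
  set g : ℝ → E := fun s => Real.exp (-μ * s) • T s x
  have hg := hT.integrableOn_exp_smul hbound hμ x
  have htail : ∫ s in Ioi t, g s = semigroupLaplace T μ x - ∫ s in (0 : ℝ)..t, g s := by
    rw [eq_sub_iff_add_eq, intervalIntegral.integral_of_le ht.le, add_comm,
      ← setIntegral_union (Ioc_disjoint_Ioi le_rfl) measurableSet_Ioi
        (hg.mono_set Ioc_subset_Ioi_self) (hg.mono_set (Ioi_subset_Ioi ht.le)),
      Ioc_union_Ioi_eq_Ioi ht.le]
    rfl
  have hshift : ∫ s in Ioi 0, g (s + t) = ∫ s in Ioi t, g s := by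
    have h := (measurePreserving_add_right volume t).setIntegral_image_emb
      (measurableEmbedding_addRight t) g (Ioi 0)
    rwa [image_add_const_Ioi, zero_add, eq_comm] at h
  have hsemi : ∀ s ∈ Ioi (0 : ℝ), T t (g s) = Real.exp (μ * t) • g (s + t) := by
    intro s hs
    have hcomp : T (t + s) x = T t (T s x) := by rw [hT.2.1 t s ht.le (le_of_lt hs)]; rfl
    calc T t (g s) = Real.exp (-μ * s) • T t (T s x) := (T t).map_smul_of_tower _ _
      _ = Real.exp (μ * t) • g (s + t) := by
        rw [smul_smul, ← Real.exp_add, add_comm s t, hcomp]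
        congr 2
        ring
  calc T t (semigroupLaplace T μ x) = ∫ s in Ioi 0, T t (g s) :=
        ((T t).integral_comp_comm hg).symm
    _ = ∫ s in Ioi 0, Real.exp (μ * t) • g (s + t) := setIntegral_congr_fun measurableSet_Ioi hsemi
    _ = _ := by rw [integral_smul, hshift, htail]

theorem IsC0Semigroup.tendsto_semigroupLaplace [CompleteSpace E] (hT : IsC0Semigroup T)
    (hbound : ∀ t : ℝ, 0 ≤ t → ‖T t‖ ≤ M * Real.exp (ω * t)) (hμ : ω < μ) (x : E) :
    Tendsto (fun t : ℝ => (t : ℂ)⁻¹ • (T t (semigroupLaplace T μ x) - semigroupLaplace T μ x))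
      (𝓝[>] 0) (𝓝 ((μ : ℂ) • semigroupLaplace T μ x - x)) := by
  set L := semigroupLaplace T μ x
  set F : ℝ → E := fun t => ∫ s in (0 : ℝ)..t, Real.exp (-μ * s) • T s x
  have hF : Tendsto (fun t : ℝ => t⁻¹ • F t) (𝓝[>] 0) (𝓝 x) := by
    convert tendsto_inv_smul_intervalIntegral_zero (hT.continuousOn_exp_smul μ x) using 2
    simp [hT.1]
  have hF0 : Tendsto F (𝓝[>] 0) (𝓝 0) := by
    have h := (tendsto_nhdsWithin_of_tendsto_nhds tendsto_id).smul hF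
    rw [zero_smul] at h
    refine h.congr' ?_
    filter_upwards [self_mem_nhdsWithin] with t (ht : (0 : ℝ) < t)
    rw [id, smul_inv_smul₀ ht.ne']
  have hexp : Tendsto (fun t : ℝ => t⁻¹ * (Real.exp (μ * t) - 1)) (𝓝[>] 0) (𝓝 μ) := by
    have hd : HasDerivAt (fun t : ℝ => Real.exp (μ * t)) μ 0 := by
      simpa using ((hasDerivAt_id (0 : ℝ)).const_mul μ).exp
    refine ((hasDerivAt_iff_tendsto_slope.mp hd).mono_left
      (nhdsWithin_mono 0 fun t ht => ne_of_gt ht)).congr fun t => ?_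
    simp [slope_def_field, div_eq_inv_mul]
  -- By `apply_semigroupLaplace`, `(T t L - L) / t = ((e^{μt} - 1) / t) • (L - F t) - F t / t`.
  have hlim := (hexp.smul ((tendsto_const_nhds (x := L)).sub hF0)).sub hF
  rw [sub_zero, ← Complex.coe_smul] at hlim
  refine hlim.congr' ?_
  filter_upwards [self_mem_nhdsWithin] with t (ht : (0 : ℝ) < t)
  rw [hT.apply_semigroupLaplace hbound hμ x ht, ← Complex.ofReal_inv, Complex.coe_smul]
  module

theorem IsGenerator.exists_sub_apply_semigroupLaplace [CompleteSpace E] {A : E →ₗ.[ℂ] E}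
    (hgen : IsGenerator T A) (hbound : ∀ t : ℝ, 0 ≤ t → ‖T t‖ ≤ M * Real.exp (ω * t))
    (hμ : ω < μ) (x : E) :
    ∃ h : semigroupLaplace T μ x ∈ A.domain,
      (μ : ℂ) • semigroupLaplace T μ x - A ⟨semigroupLaplace T μ x, h⟩ = x := by
  have htend := hgen.1.tendsto_semigroupLaplace hbound hμ x
  have hmem := hgen.2.2 _ ⟨_, htend⟩
  refine ⟨hmem, ?_⟩
  rw [tendsto_nhds_unique (hgen.2.1 ⟨_, hmem⟩) htend, sub_sub_cancel]

theorem IsResolventAt.apply_eq_semigroupLaplace [CompleteSpace E] {A : E →ₗ.[ℂ] E}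
    {r : E →L[ℂ] E} (hr : IsResolventAt A μ r) (hgen : IsGenerator T A)
    (hbound : ∀ t : ℝ, 0 ≤ t → ‖T t‖ ≤ M * Real.exp (ω * t)) (hμ : ω < μ) (x : E) :
    r x = semigroupLaplace T μ x := by
  obtain ⟨hmem, hx⟩ := hgen.exists_sub_apply_semigroupLaplace hbound hμ x
  simpa only [hx] using hr.2 ⟨_, hmem⟩

theorem IsResolventAt.norm_le_of_isGenerator [CompleteSpace E] {A : E →ₗ.[ℂ] E}
    {r : E →L[ℂ] E} (hr : IsResolventAt A μ r) (hgen : IsGenerator T A)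
    (hbound : ∀ t : ℝ, 0 ≤ t → ‖T t‖ ≤ M * Real.exp (ω * t)) (hμ : ω < μ) :
    ‖r‖ ≤ M / (μ - ω) := by
  have hM : 0 ≤ M := by simpa using (norm_nonneg _).trans (hbound 0 le_rfl)
  refine r.opNorm_le_bound (div_nonneg hM (sub_pos.2 hμ).le) fun x => ?_
  rw [hr.apply_eq_semigroupLaplace hgen hbound hμ x]
  exact norm_semigroupLaplace_le hbound hμ x

end Laplace

section Perturbation

variable {E : Type*} [NormedAddCommGroup E] [NormedSpace ℂ E]

theorem IsResolventAt.add_comp_inv {A C : E →ₗ.[ℂ] E} {μ : ℂ} {r K : E →L[ℂ] E}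
    (hr : IsResolventAt A μ r) (hdom : A.domain ≤ C.domain)
    (hK : ∀ x : E, ∀ hx : r x ∈ C.domain, K x = C ⟨r x, hx⟩)
    (u : (E →L[ℂ] E)ˣ) (hu : (u : E →L[ℂ] E) = 1 - K) :
    IsResolventAt (A + C) μ (r ∘L ↑u⁻¹) := by
  set v : E →L[ℂ] E := ↑u⁻¹
  have hu_apply : ∀ z, (u : E →L[ℂ] E) z = z - K z := fun z => by rw [hu]; rfl
  have hvu : ∀ z, (u : E →L[ℂ] E) (v z) = z := fun z => by
    rw [← mul_apply_eq_comp, u.mul_inv, one_apply_eq_self]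
  have huv : ∀ z, v ((u : E →L[ℂ] E) z) = z := fun z => by
    rw [← mul_apply_eq_comp, u.inv_mul, one_apply_eq_self]
  constructor
  · intro x
    obtain ⟨hA, hAx⟩ := hr.1 (v x)
    have hC : r (v x) ∈ C.domain := hdom hA
    refine ⟨⟨hA, hC⟩, ?_⟩
    calc μ • r (v x) - (A + C) ⟨r (v x), ⟨hA, hC⟩⟩
        = (μ • r (v x) - A ⟨_, hA⟩) - C ⟨_, hC⟩ := by
          rw [LinearPMap.add_apply, sub_add_eq_sub_sub]
      _ = (u : E →L[ℂ] E) (v x) := by rw [hAx, hu_apply, hK _ hC]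
      _ = x := hvu x
  · rintro ⟨y, hA, hC⟩
    set w := μ • y - A ⟨y, hA⟩
    have hrw : r w = y := hr.2 ⟨y, hA⟩
    have hCw : K w = C ⟨y, hC⟩ := by
      rw [hK w (hrw ▸ hC)]
      exact congrArg C (Subtype.ext hrw)
    have hsub : μ • y - (A + C) ⟨y, hA, hC⟩ = (u : E →L[ℂ] E) w := by
      rw [LinearPMap.add_apply, hu_apply, hCw, sub_add_eq_sub_sub]
    rw [hsub, ContinuousLinearMap.comp_apply, huv, hrw]

theorem norm_inv_oneSub_le {R : Type*} [NormedRing R] [HasSummableGeomSeries R]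
    (hR : ‖(1 : R)‖ ≤ 1) (t : R) (ht : ‖t‖ < 1) :
    ‖(↑(Units.oneSub t ht)⁻¹ : R)‖ ≤ (1 - ‖t‖)⁻¹ :=
  (tsum_geometric_le_of_norm_lt_one t ht).trans (by linarith)

theorem div_mul_inv_one_sub_le {M a k b : ℝ} (hM : 0 ≤ M) (hak : a * k ≤ b) (hba : b < a) :
    M / a * (1 - k)⁻¹ ≤ M / (a - b) := by
  rw [← div_eq_mul_inv, div_div, mul_one_sub]
  exact div_le_div_of_nonneg_left hM (sub_pos.2 hba) (by linarith)

end Perturbation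

/-- For `C ∈ GL_A(X)` one has `μ ∈ ρ(A+C)` and `‖R(μ,A+C)‖ ≤ M/(μ-(ω+M²‖C‖_A))` for all
`μ > ω + M²‖C‖_A`. -/
theorem perturbed_resolvent_bound_GL_A
    {X : Type*} [NormedAddCommGroup X] [NormedSpace ℂ X] [CompleteSpace X]
    (A C : X →ₗ.[ℂ] X) (T : ℝ → X →L[ℂ] X) (M ω : ℝ)
    (hM : 1 ≤ M)
    (hgen : IsGenerator T A)
    (hbound : ∀ t : ℝ, 0 ≤ t → ‖T t‖ ≤ M * Real.exp (ω * t))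
    (hdom : C.domain = A.domain)
    (Rres : ℝ → X →L[ℂ] X)
    (hRres : ∀ μ : ℝ, ω < μ → IsResolventAt A (μ : ℂ) (Rres μ))
    (CR : ℝ → X →L[ℂ] X)
    (hCRdef : ∀ μ : ℝ, ω < μ → ∀ x : X, ∀ hx : Rres μ x ∈ C.domain,
      CR μ x = C ⟨Rres μ x, hx⟩)
    (hb : BddAbove {r : ℝ | ∃ μ : ℝ, ω < μ ∧ r = (μ - ω) * ‖CR μ‖})
    (normA : ℝ)
    (hnormA : normA = (1 / M) * sSup {r : ℝ | ∃ μ : ℝ, ω < μ ∧ r = (μ - ω) * ‖CR μ‖}) :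
    ∀ μ : ℝ, ω + M ^ 2 * normA < μ → ∃ R : X →L[ℂ] X,
      IsResolventAt (A + C) (μ : ℂ) R ∧ ‖R‖ ≤ M / (μ - (ω + M ^ 2 * normA)) := by
  intro μ hμ
  set S := {r : ℝ | ∃ μ : ℝ, ω < μ ∧ r = (μ - ω) * ‖CR μ‖}
  have hS : 0 ≤ sSup S := Real.sSup_nonneg fun r ⟨ν, hν, hr⟩ =>
    hr ▸ mul_nonneg (sub_pos.2 hν).le (norm_nonneg (CR ν))
  have hnormA_nonneg : 0 ≤ normA := by rw [hnormA]; exact mul_nonneg (by positivity) hS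
  have hω : ω < μ := by nlinarith
  have hK : (μ - ω) * ‖CR μ‖ ≤ M ^ 2 * normA :=
    calc (μ - ω) * ‖CR μ‖ ≤ sSup S := le_csSup hb ⟨μ, hω, rfl⟩
      _ = M * normA := by rw [hnormA]; field_simp
      _ ≤ M ^ 2 * normA := mul_le_mul_of_nonneg_right (by nlinarith) hnormA_nonneg
  have hK1 : ‖CR μ‖ < 1 :=
    lt_of_mul_lt_mul_left (by linarith : (μ - ω) * ‖CR μ‖ < (μ - ω) * 1) (sub_pos.2 hω).le
  set v : X →L[ℂ] X := ↑(Units.oneSub (CR μ) hK1)⁻¹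
  have hres : IsResolventAt (A + C) (μ : ℂ) (Rres μ ∘L v) :=
    (hRres μ hω).add_comp_inv hdom.ge (hCRdef μ hω) _ (Units.val_oneSub _ _)
  have hr : ‖Rres μ‖ ≤ M / (μ - ω) := (hRres μ hω).norm_le_of_isGenerator hgen hbound hω
  have hv : ‖v‖ ≤ (1 - ‖CR μ‖)⁻¹ :=
    norm_inv_oneSub_le ContinuousLinearMap.norm_id_le _ hK1
  refine ⟨_, hres, ?_⟩
  calc ‖Rres μ ∘L v‖ ≤ ‖Rres μ‖ * ‖v‖ := (Rres μ).opNorm_comp_le _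
    _ ≤ M / (μ - ω) * (1 - ‖CR μ‖)⁻¹ :=
        mul_le_mul hr hv (norm_nonneg _) ((norm_nonneg _).trans hr)
    _ ≤ M / (μ - (ω + M ^ 2 * normA)) := by
        rw [← sub_sub]
        exact div_mul_inv_one_sub_le (by linarith) hK (by linarith)
end
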